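/- arXiv:math-ph/0311017 — 4 statements merged into one kernel-verified Lean document; each statement's English description precedes it below -/
import Mathlib

section
/- For a mean-field model with g : [-1,1] → ℝ bounded and convex, the thermodynamic limit of the free energy density exists: lim_{N→∞} α_N = inf_N α_N, where α_N = (1/N) log ∑_{σ∈{-1,1}^N} exp(βN g(m_N(σ))). -/
open Finset Filter

noncomputable def spin (b : Bool) : ℝ := if b then 1 else -1

noncomputable def mag (N : ℕ) (σ : Fin N → Bool) : ℝ := (∑ i, spin (σ i)) / N

noncomputable def alphaMF (β : ℝ) (g : ℝ → ℝ) (N : ℕ) : ℝ :=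
  (1 / N) * Real.log (∑ σ : Fin N → Bool, Real.exp (β * N * g (mag N σ)))

/-! For `β ≥ 0` and convex `g`, the energy `β N g(m_N)` of a concatenation of two spin chains
of lengths `m` and `n` is at most the sum of their energies, since `m_{m+n}` is the weighted
mean of `m_m` and `m_n`. Hence the partition function is submultiplicative, `log Z_N` is
subadditive, and since `α_N ≥ β g(1)` (the all-up configuration alone) Fekete's lemma
gives `α_N → inf_N α_N`. -/

lemma ConvexOn.add_mul_le_of_nonneg {s : Set ℝ} {f : ℝ → ℝ} (hf : ConvexOn ℝ s f)
    {x y a b : ℝ} (hx : x ∈ s) (hy : y ∈ s) (ha : 0 ≤ a) (hb : 0 ≤ b) :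
    (a + b) * f ((a * x + b * y) / (a + b)) ≤ a * f x + b * f y := by
  rcases (add_nonneg ha hb).eq_or_lt with hab | hab
  · obtain ⟨rfl, rfl⟩ : a = 0 ∧ b = 0 := ⟨by linarith, by linarith⟩
    simp
  have h := (convexOn_iff_div.1 hf).2 hx hy ha hb hab
  simp only [smul_eq_mul] at h
  calc (a + b) * f ((a * x + b * y) / (a + b))
      ≤ (a + b) * (a / (a + b) * f x + b / (a + b) * f y) := by
        gcongr
        convert h using 2
        field_simp
    _ = a * f x + b * f y := by field_simp

lemma abs_spin (b : Bool) : |spin b| = 1 := by cases b <;> simp [spin]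

lemma natCast_mul_mag (N : ℕ) (σ : Fin N → Bool) : (N : ℝ) * mag N σ = ∑ i, spin (σ i) := by
  rcases eq_or_ne N 0 with rfl | hN
  · simp
  · exact mul_div_cancel₀ _ (Nat.cast_ne_zero.2 hN)

lemma mag_mem_Icc (N : ℕ) (σ : Fin N → Bool) : mag N σ ∈ Set.Icc (-1 : ℝ) 1 := by
  rw [Set.mem_Icc, ← abs_le, mag, abs_div, Nat.abs_cast]
  apply div_le_one_of_le₀ _ (Nat.cast_nonneg N)
  calc |∑ i, spin (σ i)| ≤ ∑ i, |spin (σ i)| := abs_sum_le_sum_abs _ _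
    _ = N := by simp [abs_spin]

lemma mag_const_true {N : ℕ} (hN : N ≠ 0) : mag N (fun _ => true) = 1 := by
  simp [mag, spin, hN]

lemma natCast_mul_mag_append {m n : ℕ} (σ : Fin m → Bool) (τ : Fin n → Bool) :
    ((m + n : ℕ) : ℝ) * mag (m + n) (Fin.append σ τ) = m * mag m σ + n * mag n τ := by
  simp only [natCast_mul_mag, Fin.sum_univ_add, Fin.append_left, Fin.append_right]

lemma energy_append_le {β : ℝ} (hβ : 0 ≤ β) {g : ℝ → ℝ}
    (hg : ConvexOn ℝ (Set.Icc (-1 : ℝ) 1) g) {m n : ℕ} (σ : Fin m → Bool) (τ : Fin n → Bool) :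
    β * (m + n : ℕ) * g (mag (m + n) (Fin.append σ τ)) ≤
      β * m * g (mag m σ) + β * n * g (mag n τ) := by
  have hmag : mag (m + n) (Fin.append σ τ) = (m * mag m σ + n * mag n τ) / (m + n : ℕ) := by
    rw [← natCast_mul_mag_append]
    rcases eq_or_ne (m + n) 0 with h | h
    · simp [h, mag]
    · field_simp
  have h := hg.add_mul_le_of_nonneg (mag_mem_Icc m σ) (mag_mem_Icc n τ)
    (Nat.cast_nonneg m) (Nat.cast_nonneg n)
  rw [hmag, Nat.cast_add]
  calc β * (m + n) * g ((m * mag m σ + n * mag n τ) / (m + n))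
      ≤ β * (m * g (mag m σ) + n * g (mag n τ)) := by
        rw [mul_assoc]
        exact mul_le_mul_of_nonneg_left h hβ
    _ = β * m * g (mag m σ) + β * n * g (mag n τ) := by ring

noncomputable def partitionFunction (β : ℝ) (g : ℝ → ℝ) (N : ℕ) : ℝ :=
  ∑ σ : Fin N → Bool, Real.exp (β * N * g (mag N σ))

section PartitionFunction

variable {β : ℝ} {g : ℝ → ℝ}

lemma alphaMF_eq_log_partitionFunction_div (N : ℕ) :
    alphaMF β g N = Real.log (partitionFunction β g N) / N :=
  one_div_mul_eq_div _ _

lemma partitionFunction_pos (N : ℕ) : 0 < partitionFunction β g N :=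
  sum_pos (fun _ _ => Real.exp_pos _) univ_nonempty

lemma exp_le_partitionFunction (N : ℕ) (σ : Fin N → Bool) :
    Real.exp (β * N * g (mag N σ)) ≤ partitionFunction β g N :=
  single_le_sum (f := fun σ : Fin N → Bool => Real.exp (β * N * g (mag N σ)))
    (fun _ _ => (Real.exp_pos _).le) (mem_univ σ)

lemma partitionFunction_add_le (hβ : 0 ≤ β) (hg : ConvexOn ℝ (Set.Icc (-1 : ℝ) 1) g)
    (m n : ℕ) :
    partitionFunction β g (m + n) ≤ partitionFunction β g m * partitionFunction β g n := by
  calc partitionFunction β g (m + n)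
      = ∑ p : (Fin m → Bool) × (Fin n → Bool),
          Real.exp (β * (m + n : ℕ) * g (mag (m + n) (Fin.append p.1 p.2))) :=
        ((Fin.appendEquiv m n).sum_comp
          (fun σ => Real.exp (β * (m + n : ℕ) * g (mag (m + n) σ)))).symm
    _ ≤ ∑ p : (Fin m → Bool) × (Fin n → Bool),
          Real.exp (β * m * g (mag m p.1)) * Real.exp (β * n * g (mag n p.2)) := by
        gcongr with p
        rw [← Real.exp_add]
        exact Real.exp_le_exp.2 (energy_append_le hβ hg p.1 p.2)
    _ = partitionFunction β g m * partitionFunction β g n := by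
        rw [partitionFunction, partitionFunction, sum_mul_sum, Fintype.sum_prod_type]

lemma subadditive_log_partitionFunction (hβ : 0 ≤ β)
    (hg : ConvexOn ℝ (Set.Icc (-1 : ℝ) 1) g) :
    Subadditive fun N => Real.log (partitionFunction β g N) := fun m n => by
  rw [← Real.log_mul (partitionFunction_pos m).ne' (partitionFunction_pos n).ne']
  exact Real.log_le_log (partitionFunction_pos _) (partitionFunction_add_le hβ hg m n)

lemma mul_apply_one_le_alphaMF {N : ℕ} (hN : N ≠ 0) : β * g 1 ≤ alphaMF β g N := by
  have hN' : (0 : ℝ) < N := Nat.cast_pos.2 (Nat.pos_of_ne_zero hN)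
  rw [alphaMF_eq_log_partitionFunction_div, le_div_iff₀ hN',
    ← Real.log_exp (β * g 1 * N)]
  refine Real.log_le_log (Real.exp_pos _) ?_
  convert exp_le_partitionFunction N (fun _ => true) using 2
  rw [mag_const_true hN]
  ring

lemma bddBelow_range_alphaMF : BddBelow (Set.range (alphaMF β g)) := by
  refine ⟨min (β * g 1) 0, ?_⟩
  rintro _ ⟨N, rfl⟩
  rcases eq_or_ne N 0 with rfl | hN
  · simp [alphaMF]
  · exact (min_le_left _ _).trans (mul_apply_one_le_alphaMF hN)

end PartitionFunction

theorem thermodynamic_limit_convex_general (β : ℝ) (hβ : 0 < β) (g : ℝ → ℝ)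
    (hconv : ConvexOn ℝ (Set.Icc (-1 : ℝ) 1) g) :
    Tendsto (fun N : ℕ => alphaMF β g N) atTop
      (nhds (sInf {x : ℝ | ∃ N : ℕ, 1 ≤ N ∧ x = alphaMF β g N})) := by
  have hsub := subadditive_log_partitionFunction hβ.le hconv
  have hα : (fun N : ℕ => Real.log (partitionFunction β g N) / N) = alphaMF β g :=
    funext fun N => (alphaMF_eq_log_partitionFunction_div N).symm
  have hlim := hsub.tendsto_lim (hα ▸ bddBelow_range_alphaMF)
  rw [Subadditive.lim, hα] at hlim
  convert hlim using 3
  ext x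
  simp [eq_comm]

/-- for bounded convex `g` the thermodynamic limit exists and equals the infimum. -/
theorem thermodynamic_limit_convex (β : ℝ) (hβ : 0 < β) (g : ℝ → ℝ)
    (hbdd : ∃ C, ∀ x ∈ Set.Icc (-1 : ℝ) 1, |g x| ≤ C)
    (hconv : ConvexOn ℝ (Set.Icc (-1 : ℝ) 1) g) :
    Tendsto (fun N : ℕ => alphaMF β g N) atTop
      (nhds (sInf {x : ℝ | ∃ N : ℕ, 1 ≤ N ∧ x = alphaMF β g N})) :=
  thermodynamic_limit_convex_general β hβ g hconv
end

section
/- For every integer k ≥ 1, the generalized Curie–Weiss k-spin model with Hamiltonian H_N(σ) = -N m_N(σ)^k has a thermodynamic limit: α_N = (1/N) log ∑_{σ∈{-1,1}^N} exp(βN m_N(σ)^k) converges as N → ∞. -/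
open Finset Filter

/-!
Grouping the configurations by their number `j` of up spins turns the partition function into
`∑ j, choose N j * exp (N * f (j / N))` with `f p = β * (2 * p - 1) ^ k`. The product
`choose N j * exp (-N * binEntropy (j / N))` is the largest of the `N + 1` binomial weights at
`j / N`, which sum to `1`; so `choose N j` is `exp (N * binEntropy (j / N))` up to a factor
between `1 / (N + 1)` and `1`. Hence the sum lies within a factor `N + 1` of
`exp (N * max (f + binEntropy))`, and `(1 / N) * log` of it converges to the maximum of
`f + binEntropy` on `[0, 1]`.
-/

open Real Polynomial Topology

lemma pow_eq_exp_mul_log {x : ℝ} (hx : 0 ≤ x) {n : ℕ} (h : x = 0 → n = 0) :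
    x ^ n = exp (n * log x) := by
  rcases hx.eq_or_lt with rfl | hx
  · simp [h rfl]
  · rw [← log_pow, exp_log (pow_pos hx n)]

lemma natCast_div_mem_Icc {j N : ℕ} (hj : j ≤ N) : (j : ℝ) / N ∈ Set.Icc 0 1 :=
  ⟨by positivity, div_le_one_of_le₀ (by exact_mod_cast hj) (Nat.cast_nonneg N)⟩

lemma tendsto_log_add_one_div_atTop : Tendsto (fun N : ℕ ↦ log (N + 1) / N) atTop (𝓝 0) := by
  simpa [Function.comp_def] using (tendsto_pow_log_div_mul_add_atTop 1 (-1) 1 one_ne_zero).comp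
    (tendsto_atTop_add_const_right atTop (1 : ℝ) tendsto_natCast_atTop_atTop)

section Bernstein

variable {N i j : ℕ} {p : ℝ}

lemma bernsteinPolynomial_eval (N i : ℕ) (p : ℝ) :
    (bernsteinPolynomial ℝ N i).eval p = N.choose i * p ^ i * (1 - p) ^ (N - i) := by
  simp [bernsteinPolynomial]

lemma bernsteinPolynomial_eval_nonneg (hp₀ : 0 ≤ p) (hp₁ : p ≤ 1) (N i : ℕ) :
    0 ≤ (bernsteinPolynomial ℝ N i).eval p := by
  rw [bernsteinPolynomial_eval]
  have : 0 ≤ 1 - p := sub_nonneg.2 hp₁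
  positivity

lemma sum_bernsteinPolynomial_eval (N : ℕ) (p : ℝ) :
    ∑ i ∈ range (N + 1), (bernsteinPolynomial ℝ N i).eval p = 1 := by
  simpa [eval_finsetSum] using congrArg (eval p) (bernsteinPolynomial.sum ℝ N)

lemma bernsteinPolynomial_eval_succ_mul (hi : i < N) (p : ℝ) :
    (bernsteinPolynomial ℝ N (i + 1)).eval p * ((i + 1) * (1 - p)) =
      (bernsteinPolynomial ℝ N i).eval p * ((N - i) * p) := by
  have hchoose : (N.choose (i + 1) : ℝ) * (i + 1) = N.choose i * (N - i) := by
    rw [← Nat.cast_sub hi.le]; exact_mod_cast Nat.choose_succ_right_eq N i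
  have hpow : N - i = N - (i + 1) + 1 := by omega
  rw [bernsteinPolynomial_eval, bernsteinPolynomial_eval, hpow]
  linear_combination p ^ (i + 1) * (1 - p) ^ (N - (i + 1) + 1) * hchoose

lemma bernsteinPolynomial_eval_le_succ (hp₀ : 0 ≤ p) (hp₁ : p < 1) (hi : i < N)
    (h : (i + 1) * (1 - p) ≤ (N - i) * p) :
    (bernsteinPolynomial ℝ N i).eval p ≤ (bernsteinPolynomial ℝ N (i + 1)).eval p := by
  have hpos : 0 < (i + 1) * (1 - p) := by
    have : 0 < 1 - p := sub_pos.2 hp₁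
    positivity
  refine le_of_mul_le_mul_right ?_ hpos
  rw [bernsteinPolynomial_eval_succ_mul hi]
  exact mul_le_mul_of_nonneg_left h (bernsteinPolynomial_eval_nonneg hp₀ hp₁.le N i)

lemma bernsteinPolynomial_eval_succ_le (hp₀ : 0 ≤ p) (hp₁ : p < 1)
    (h : (N - i) * p ≤ (i + 1) * (1 - p)) :
    (bernsteinPolynomial ℝ N (i + 1)).eval p ≤ (bernsteinPolynomial ℝ N i).eval p := by
  rcases lt_or_ge i N with hi | hi
  · have hpos : 0 < (i + 1) * (1 - p) := by
      have : 0 < 1 - p := sub_pos.2 hp₁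
      positivity
    refine le_of_mul_le_mul_right ?_ hpos
    rw [bernsteinPolynomial_eval_succ_mul hi]
    exact mul_le_mul_of_nonneg_left h (bernsteinPolynomial_eval_nonneg hp₀ hp₁.le N i)
  · rw [bernsteinPolynomial.eq_zero_of_lt ℝ (Nat.lt_succ_of_le hi), eval_zero]
    exact bernsteinPolynomial_eval_nonneg hp₀ hp₁.le N i

lemma bernsteinPolynomial_eval_le_natCast_div (hj₀ : 0 < j) (hjN : j < N) (i : ℕ) :
    (bernsteinPolynomial ℝ N i).eval ((j : ℝ) / N) ≤
      (bernsteinPolynomial ℝ N j).eval ((j : ℝ) / N) := by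
  set t : ℕ → ℝ := fun i ↦ (bernsteinPolynomial ℝ N i).eval ((j : ℝ) / N)
  have hN : (0 : ℝ) < N := by exact_mod_cast hj₀.trans hjN
  have hp₀ : (0 : ℝ) ≤ j / N := by positivity
  have hp₁ : (j : ℝ) / N < 1 := by rw [div_lt_one hN]; exact_mod_cast hjN
  have hq : 1 - (j : ℝ) / N = (N - j) / N := by field_simp
  rcases le_total i j with hij | hji
  · refine monotoneOn_of_le_succ (f := t) (s := Set.Iic j) Set.ordConnected_Iic
      (fun n _ _ hn ↦ ?_) hij (Set.mem_Iic.2 le_rfl) hij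
    rw [Order.succ_eq_add_one, Set.mem_Iic] at hn
    refine bernsteinPolynomial_eval_le_succ hp₀ hp₁ (by omega) ?_
    rw [hq, ← mul_div_assoc, ← mul_div_assoc, div_le_div_iff_of_pos_right hN]
    have : ((n : ℝ) + 1) ≤ j := by exact_mod_cast hn
    nlinarith
  · refine antitoneOn_nat_Ici_of_succ_le (f := t) (k := j) (fun n hn ↦ ?_) (le_refl j) hji hji
    refine bernsteinPolynomial_eval_succ_le hp₀ hp₁ ?_
    rw [hq, ← mul_div_assoc, ← mul_div_assoc, div_le_div_iff_of_pos_right hN]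
    have hjn : (j : ℝ) ≤ n := by exact_mod_cast hn
    have hjN' : (j : ℝ) ≤ N := by exact_mod_cast hjN.le
    rcases le_total (n : ℝ) N with hnN | hNn <;> nlinarith

lemma bernsteinPolynomial_eval_natCast_div_self (hj : j ≤ N) :
    (bernsteinPolynomial ℝ N j).eval ((j : ℝ) / N) =
      N.choose j * exp (-(N * binEntropy (j / N))) := by
  rcases Nat.eq_zero_or_pos N with rfl | hN
  · obtain rfl : j = 0 := by omega
    simp [bernsteinPolynomial_eval]
  have hN : (0 : ℝ) < N := by exact_mod_cast hN
  have hq : 1 - (j : ℝ) / N = ((N - j : ℕ) : ℝ) / N := by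
    rw [Nat.cast_sub hj]; field_simp
  have hnum {m : ℕ} (h : (m : ℝ) / N = 0) : m = 0 := by
    exact_mod_cast (div_eq_zero_iff.1 h).resolve_right hN.ne'
  rw [bernsteinPolynomial_eval, mul_assoc, hq, pow_eq_exp_mul_log (by positivity) hnum,
    pow_eq_exp_mul_log (by positivity) hnum, ← exp_add, ← hq,
    binEntropy_eq_negMulLog_add_negMulLog_one_sub, Nat.cast_sub hj]
  congr 2
  simp only [negMulLog]
  field_simp
  ring

theorem choose_le_exp_binEntropy (hj : j ≤ N) :
    (N.choose j : ℝ) ≤ exp (N * binEntropy (j / N)) := by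
  have h : (bernsteinPolynomial ℝ N j).eval ((j : ℝ) / N) ≤ 1 := by
    rw [← sum_bernsteinPolynomial_eval N (j / N)]
    obtain ⟨hp₀, hp₁⟩ := natCast_div_mem_Icc hj
    exact single_le_sum (fun i _ ↦ bernsteinPolynomial_eval_nonneg hp₀ hp₁ N i)
      (mem_range.2 (Nat.lt_succ_of_le hj))
  rwa [bernsteinPolynomial_eval_natCast_div_self hj, exp_neg, ← div_eq_mul_inv,
    div_le_one (exp_pos _)] at h

theorem exp_binEntropy_le_choose (hj : j ≤ N) :
    exp (N * binEntropy (j / N)) ≤ (N + 1) * N.choose j := by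
  rcases Nat.eq_zero_or_pos j with rfl | hj₀
  · simp
  rcases hj.eq_or_lt with rfl | hjN
  · simp [div_self (Nat.cast_ne_zero.2 hj₀.ne' : (j : ℝ) ≠ 0)]
  have h : 1 ≤ (N + 1) * (bernsteinPolynomial ℝ N j).eval ((j : ℝ) / N) := by
    have := sum_le_card_nsmul (range (N + 1)) _ _
      (fun i _ ↦ bernsteinPolynomial_eval_le_natCast_div hj₀ hjN i)
    rwa [sum_bernsteinPolynomial_eval, card_range, nsmul_eq_mul, Nat.cast_succ] at this
  rwa [bernsteinPolynomial_eval_natCast_div_self hj, exp_neg, ← mul_assoc, ← div_eq_mul_inv,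
    one_le_div (exp_pos _)] at h

end Bernstein

noncomputable def binomialExpSum (f : ℝ → ℝ) (N : ℕ) : ℝ :=
  ∑ j ∈ range (N + 1), (N.choose j : ℝ) * exp (N * f (j / N))

section Laplace

variable (f : ℝ → ℝ)

lemma binomialExpSum_pos (N : ℕ) : 0 < binomialExpSum f N :=
  sum_pos (fun j hj ↦ mul_pos
    (by exact_mod_cast Nat.choose_pos (Nat.lt_succ_iff.1 (mem_range.1 hj))) (exp_pos _))
    nonempty_range_add_one

lemma log_binomialExpSum_le {M : ℝ} (hM : ∀ p ∈ Set.Icc (0 : ℝ) 1, f p + binEntropy p ≤ M)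
    (N : ℕ) : log (binomialExpSum f N) ≤ N * M + log (N + 1) := by
  have hterm (j : ℕ) (hj : j ∈ range (N + 1)) :
      (N.choose j : ℝ) * exp (N * f (j / N)) ≤ exp (N * M) := by
    have hjN := Nat.lt_succ_iff.1 (mem_range.1 hj)
    calc (N.choose j : ℝ) * exp (N * f (j / N))
        ≤ exp (N * binEntropy (j / N)) * exp (N * f (j / N)) :=
          mul_le_mul_of_nonneg_right (choose_le_exp_binEntropy hjN) (exp_nonneg _)
      _ = exp (N * (f (j / N) + binEntropy (j / N))) := by rw [← exp_add]; ring_nf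
      _ ≤ exp (N * M) :=
          exp_le_exp.2 <|
            mul_le_mul_of_nonneg_left (hM _ (natCast_div_mem_Icc hjN)) N.cast_nonneg
  have hsum := sum_le_card_nsmul _ _ _ hterm
  rw [card_range, nsmul_eq_mul, Nat.cast_succ] at hsum
  calc _ ≤ log ((N + 1) * exp (N * M)) := log_le_log (binomialExpSum_pos f N) hsum
    _ = N * M + log (N + 1) := by
      rw [log_mul (by positivity) (exp_pos _).ne', log_exp, add_comm]

lemma le_log_binomialExpSum {j N : ℕ} (hj : j ≤ N) :
    N * (f (j / N) + binEntropy (j / N)) - log (N + 1) ≤ log (binomialExpSum f N) := by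
  have hterm : exp (N * (f (j / N) + binEntropy (j / N))) / (N + 1) ≤
      (N.choose j : ℝ) * exp (N * f (j / N)) := by
    rw [div_le_iff₀ (by positivity), mul_add, exp_add]
    calc _ ≤ exp (N * f (j / N)) * ((N + 1) * N.choose j) := by
          gcongr; exact exp_binEntropy_le_choose hj
      _ = _ := by ring
  have hsum := hterm.trans <| single_le_sum
    (f := fun i ↦ (N.choose i : ℝ) * exp (N * f (i / N))) (fun i _ ↦ by positivity)
    (mem_range.2 (Nat.lt_succ_of_le hj))
  calc _ = log (exp (N * (f (j / N) + binEntropy (j / N))) / (N + 1)) := by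
        rw [log_div (exp_pos _).ne' (by positivity), log_exp]
    _ ≤ _ := log_le_log (by positivity) hsum

theorem tendsto_log_binomialExpSum (hf : ContinuousOn f (Set.Icc 0 1)) {p₀ : ℝ}
    (hp₀ : p₀ ∈ Set.Icc (0 : ℝ) 1)
    (hmax : IsMaxOn (fun p ↦ f p + binEntropy p) (Set.Icc 0 1) p₀) :
    Tendsto (fun N : ℕ ↦ 1 / (N : ℝ) * log (binomialExpSum f N))
      atTop (𝓝 (f p₀ + binEntropy p₀)) := by
  set φ := fun p ↦ f p + binEntropy p
  set j : ℕ → ℕ := fun N ↦ ⌊p₀ * N⌋₊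
  have hjN (N : ℕ) : j N ≤ N := Nat.floor_le_of_le (mul_le_of_le_one_left N.cast_nonneg hp₀.2)
  have hφj : Tendsto (fun N ↦ φ (j N / N)) atTop (𝓝 (φ p₀)) :=
    ((hf.add binEntropy_continuous.continuousOn) p₀ hp₀).tendsto.comp <|
      tendsto_nhdsWithin_iff.2 ⟨(tendsto_nat_floor_mul_div_atTop hp₀.1).comp
        tendsto_natCast_atTop_atTop, .of_forall fun N ↦ natCast_div_mem_Icc (hjN N)⟩
  have hlower := hφj.sub tendsto_log_add_one_div_atTop
  have hupper := (tendsto_const_nhds (x := φ p₀)).add tendsto_log_add_one_div_atTop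
  rw [sub_zero] at hlower
  rw [add_zero] at hupper
  refine tendsto_of_tendsto_of_tendsto_of_le_of_le' hlower hupper ?_ ?_ <;>
    filter_upwards [eventually_gt_atTop 0] with N hN <;>
    have hN : (0 : ℝ) < N := Nat.cast_pos.2 hN
  · rw [one_div_mul_eq_div, le_div_iff₀ hN]
    have hexpand : (φ (j N / N) - log (N + 1) / N) * N = N * φ (j N / N) - log (N + 1) := by
      field_simp
    exact hexpand ▸ le_log_binomialExpSum f (hjN N)
  · rw [one_div_mul_eq_div, div_le_iff₀ hN]
    have hexpand : (φ p₀ + log (N + 1) / N) * N = N * φ p₀ + log (N + 1) := by field_simp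
    exact hexpand ▸ log_binomialExpSum_le f (fun p hp ↦ hmax hp) N

end Laplace

section Configurations

variable {α : Type*} [Fintype α]

def funBoolEquivFinset (α : Type*) [Fintype α] [DecidableEq α] :
    (α → Bool) ≃ Finset α where
  toFun σ := {a | σ a}
  invFun s a := a ∈ s
  left_inv σ := by ext; simp
  right_inv s := by ext; simp

lemma sum_fun_bool_eq_sum_choose [DecidableEq α] {M : Type*} [AddCommMonoid M]
    (g : ℕ → M) :
    ∑ σ : α → Bool, g #{a | σ a} =
      ∑ j ∈ range (Fintype.card α + 1), (Fintype.card α).choose j • g j := by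
  rw [← card_univ, ← sum_powerset_apply_card, powerset_univ]
  exact Fintype.sum_equiv (funBoolEquivFinset α) _ _ fun σ ↦ rfl

lemma sum_spin (σ : α → Bool) : ∑ a, spin (σ a) = 2 * #{a | σ a} - Fintype.card α := by
  have hspin (b : Bool) : spin b = 2 * (if b then 1 else 0) - 1 := by
    cases b <;> norm_num [spin]
  simp only [hspin, sum_sub_distrib, ← mul_sum, sum_boole, sum_const, card_univ, nsmul_one]

end Configurations

lemma sum_exp_mag_pow (β : ℝ) (k N : ℕ) :
    ∑ σ : Fin N → Bool, exp (β * N * mag N σ ^ k) =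
      binomialExpSum (fun p ↦ β * (2 * p - 1) ^ k) N := by
  have hexponent (σ : Fin N → Bool) :
      β * N * mag N σ ^ k = N * (β * (2 * (#{i | σ i} / N) - 1) ^ k) := by
    rcases eq_or_ne N 0 with rfl | hN
    · simp
    rw [mag, sum_spin, Fintype.card_fin]
    field_simp
  simp_rw [hexponent]
  rw [sum_fun_bool_eq_sum_choose (fun j ↦ exp (N * (β * (2 * ((j : ℝ) / N) - 1) ^ k))),
    Fintype.card_fin, binomialExpSum]
  simp only [nsmul_eq_mul]

theorem curie_weiss_pspin_limit_general (β : ℝ) (k : ℕ) :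
    ∃ L : ℝ, Tendsto (fun N : ℕ =>
      (1 / (N : ℝ)) * Real.log (∑ σ : Fin N → Bool, Real.exp (β * N * (mag N σ) ^ k)))
      atTop (nhds L) := by
  set f : ℝ → ℝ := fun p ↦ β * (2 * p - 1) ^ k
  obtain ⟨p₀, hp₀, hmax⟩ := isCompact_Icc.exists_isMaxOn (Set.nonempty_Icc.2 zero_le_one)
    (by fun_prop : Continuous fun p ↦ f p + binEntropy p).continuousOn
  refine ⟨f p₀ + binEntropy p₀, ?_⟩
  simp_rw [sum_exp_mag_pow]
  exact tendsto_log_binomialExpSum f (by fun_prop) hp₀ hmax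

/-- the generalized Curie–Weiss k-spin model has a thermodynamic limit. -/
theorem curie_weiss_pspin_limit (β : ℝ) (hβ : 0 < β) (k : ℕ) (hk : 1 ≤ k) :
    ∃ L : ℝ, Tendsto (fun N : ℕ =>
      (1 / (N : ℝ)) * Real.log (∑ σ : Fin N → Bool, Real.exp (β * N * (mag N σ) ^ k)))
      atTop (nhds L) :=
  curie_weiss_pspin_limit_general β k
end

section
/- For any polynomial g(x) = ∑_{k=0}^n a_k x^k with real coefficients, the free energy density α_N = (1/N) log ∑_{σ∈{-1,1}^N} exp(βN g(m_N(σ))) converges as N → ∞. -/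
/-!
With `f = β g`, grouping the configurations by their number `j` of up spins turns the partition
function into `∑ j ≤ N, (N choose j) * exp (N * f (2 * j / N - 1))`. By Stirling's bounds,
`log (N choose j) = N * binEntropy (j / N) + O(log N)` uniformly in `j`, so the sum is a sum of
`N + 1` exponentials `exp (N * F (j / N) + O(log N))` with `F x = f (2 * x - 1) + binEntropy x`.
Such a sum lies between its largest term and `N + 1` times it, and the grid points
`⌊x₀ * N⌋₊ / N` approach a maximiser `x₀` of `F` on `[0, 1]`; hence `α_N → F x₀`.
-/

open Finset Filter

open Real Topology
open scoped Nat

lemma le_log_factorial (n : ℕ) : n * log n - n ≤ log n ! := by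
  rcases eq_or_ne n 0 with rfl | hn
  · simp
  have h2π : (1 : ℝ) ≤ 2 * π := by linarith [pi_gt_three]
  linarith [Stirling.le_log_factorial_stirling hn, log_natCast_nonneg n, log_nonneg h2π]

lemma log_factorial_le (n : ℕ) : log n ! ≤ n * log n - n + 1 + log n / 2 := by
  rcases eq_or_ne n 0 with rfl | hn
  · simp
  -- Stirling's sequence `n! / (√(2n) (n/e)^n)` decreases, so it is at most its value `e/√2` at 1.
  obtain ⟨m, rfl⟩ := Nat.exists_eq_succ_of_ne_zero hn
  have hle : log (Stirling.stirlingSeq (m + 1)) ≤ log (Stirling.stirlingSeq 1) :=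
    log_le_log (Stirling.stirlingSeq'_pos m) (Stirling.stirlingSeq'_antitone (Nat.zero_le m))
  have hpos : (0 : ℝ) < (m + 1 : ℕ) := by positivity
  rw [Stirling.log_stirlingSeq_formula, Stirling.stirlingSeq_one, log_div (exp_pos 1).ne'
    (by positivity), log_exp, log_sqrt zero_le_two, log_mul two_ne_zero hpos.ne',
    log_div hpos.ne' (exp_pos 1).ne', log_exp] at hle
  linarith

lemma mul_binEntropy_div (a b : ℝ) :
    (a + b) * binEntropy (a / (a + b)) = negMulLog a + negMulLog b - negMulLog (a + b) := by
  rcases eq_or_ne (a + b) 0 with h | h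
  · obtain rfl : b = -a := by linarith
    simp [negMulLog, log_neg_eq_log]
  have h1 : 1 - a / (a + b) = b * (a + b)⁻¹ := by field_simp; ring
  rw [binEntropy_eq_negMulLog_add_negMulLog_one_sub, h1, div_eq_mul_inv, negMulLog_mul,
    negMulLog_mul]
  simp only [negMulLog, log_inv]
  field_simp
  ring

lemma log_natCast_le_log_natCast {m n : ℕ} (h : m ≤ n) : log m ≤ log n := by
  rcases Nat.eq_zero_or_pos m with rfl | hm
  · simpa using log_natCast_nonneg n
  exact log_le_log (by positivity) (by exact_mod_cast h)

lemma abs_log_choose_sub_mul_binEntropy_le {N j : ℕ} (hj : j ≤ N) :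
    |log (N.choose j) - N * binEntropy (j / N)| ≤ 2 + log N := by
  have hchoose : log (N.choose j) = log N ! - log j ! - log (N - j)! := by
    rw [← Nat.choose_mul_factorial_mul_factorial hj, Nat.cast_mul, Nat.cast_mul,
      log_mul (by positivity [Nat.choose_pos hj]) (by positivity),
      log_mul (by positivity [Nat.choose_pos hj]) (by positivity)]
    ring
  have hentropy : (N : ℝ) * binEntropy (j / N) =
      negMulLog j + negMulLog (N - j : ℕ) - negMulLog N := by
    simpa [Nat.cast_sub hj] using mul_binEntropy_div (j : ℝ) (N - j : ℕ)
  rw [hchoose, hentropy, abs_le]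
  simp only [negMulLog]
  constructor <;> linarith [le_log_factorial N, log_factorial_le N, le_log_factorial j,
    log_factorial_le j, le_log_factorial (N - j), log_factorial_le (N - j),
    log_natCast_le_log_natCast hj, log_natCast_le_log_natCast (Nat.sub_le N j),
    log_natCast_nonneg j, log_natCast_nonneg (N - j),
    (Nat.cast_sub hj : ((N - j : ℕ) : ℝ) = N - j)]

lemma log_sum_exp_le {ι : Type*} {s : Finset ι} (hs : s.Nonempty) {f : ι → ℝ} {M : ℝ}
    (h : ∀ i ∈ s, f i ≤ M) : log (∑ i ∈ s, exp (f i)) ≤ log #s + M := by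
  have hsum : ∑ i ∈ s, exp (f i) ≤ #s * exp M := by
    simpa using Finset.sum_le_sum fun i hi => exp_le_exp.2 (h i hi)
  calc log (∑ i ∈ s, exp (f i)) ≤ log (#s * exp M) :=
        log_le_log (Finset.sum_pos (fun i _ => exp_pos _) hs) hsum
    _ = log #s + M := by rw [log_mul (by simpa using hs.ne_empty) (exp_pos M).ne', log_exp]

lemma le_log_sum_exp {ι : Type*} {s : Finset ι} (f : ι → ℝ) {i : ι} (hi : i ∈ s) :
    f i ≤ log (∑ i ∈ s, exp (f i)) := by
  rw [← log_exp (f i)]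
  exact log_le_log (exp_pos _) (Finset.single_le_sum (fun j _ => (exp_pos (f j)).le) hi)

lemma tendsto_log_natCast_add_div (c : ℝ) :
    Tendsto (fun N : ℕ => log (N + c) / N) atTop (𝓝 0) := by
  have := (tendsto_pow_log_div_mul_add_atTop 1 (-c) 1 one_ne_zero).comp
    (tendsto_atTop_add_const_right atTop c tendsto_natCast_atTop_atTop)
  simpa [Function.comp_def] using this

section Laplace

variable {F : ℝ → ℝ} {c : ℕ → ℕ → ℝ} {ε : ℕ → ℝ} {N : ℕ}

lemma log_sum_exp_div_le_of_isMaxOn {x₀ : ℝ} (hmax : IsMaxOn F (Set.Icc 0 1) x₀) (hN : 0 < N)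
    (hc : ∀ j ≤ N, |c N j - N * F (j / N)| ≤ ε N) :
    1 / (N : ℝ) * log (∑ j ∈ range (N + 1), exp (c N j)) ≤ F x₀ + (log (N + 1) + ε N) / N := by
  have hN' : (0 : ℝ) < N := by exact_mod_cast hN
  have hbound : ∀ j ∈ range (N + 1), c N j ≤ N * F x₀ + ε N := by
    intro j hj
    have hjN : j ≤ N := Nat.lt_succ_iff.mp (mem_range.mp hj)
    have hmem : (j : ℝ) / N ∈ Set.Icc (0 : ℝ) 1 :=
      ⟨by positivity, div_le_one_of_le₀ (by exact_mod_cast hjN) hN'.le⟩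
    have := mul_le_mul_of_nonneg_left (hmax hmem) hN'.le
    linarith [(abs_le.mp (hc j hjN)).2]
  have := log_sum_exp_le nonempty_range_add_one hbound
  rw [card_range, Nat.cast_add_one] at this
  calc 1 / (N : ℝ) * log (∑ j ∈ range (N + 1), exp (c N j))
      ≤ 1 / N * (log (N + 1) + (N * F x₀ + ε N)) := by gcongr
    _ = F x₀ + (log (N + 1) + ε N) / N := by field_simp; ring

lemma le_log_sum_exp_div {j : ℕ} (hN : 0 < N) (hj : j ≤ N)
    (hc : |c N j - N * F (j / N)| ≤ ε N) :
    F (j / N) - ε N / N ≤ 1 / (N : ℝ) * log (∑ j ∈ range (N + 1), exp (c N j)) := by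
  have hN' : (0 : ℝ) < N := by exact_mod_cast hN
  have := le_log_sum_exp (c N) (mem_range.mpr (Nat.lt_succ_of_le hj))
  calc F (j / N) - ε N / N = 1 / N * (N * F (j / N) - ε N) := by field_simp
    _ ≤ 1 / (N : ℝ) * log (∑ j ∈ range (N + 1), exp (c N j)) := by
      gcongr
      linarith [(abs_le.mp hc).1]

theorem tendsto_log_sum_exp_div {x₀ : ℝ} (hF : ContinuousOn F (Set.Icc 0 1))
    (hx₀ : x₀ ∈ Set.Icc 0 1) (hmax : IsMaxOn F (Set.Icc 0 1) x₀)
    (hε : Tendsto (fun N : ℕ => ε N / N) atTop (𝓝 0))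
    (hc : ∀ N, 0 < N → ∀ j ≤ N, |c N j - N * F (j / N)| ≤ ε N) :
    Tendsto (fun N : ℕ => 1 / (N : ℝ) * log (∑ j ∈ range (N + 1), exp (c N j)))
      atTop (𝓝 (F x₀)) := by
  have hfloor_le : ∀ N : ℕ, ⌊x₀ * N⌋₊ ≤ N := fun N =>
    Nat.floor_le_of_le (mul_le_of_le_one_left N.cast_nonneg hx₀.2)
  have hfloor : Tendsto (fun N : ℕ => (⌊x₀ * N⌋₊ : ℝ) / N) atTop (𝓝[Set.Icc 0 1] x₀) := by
    refine tendsto_nhdsWithin_iff.mpr ⟨(tendsto_nat_floor_mul_div_atTop hx₀.1).comp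
      tendsto_natCast_atTop_atTop, Eventually.of_forall fun N => ⟨by positivity, ?_⟩⟩
    exact div_le_one_of_le₀ (by exact_mod_cast hfloor_le N) N.cast_nonneg
  have hlower := ((hF x₀ hx₀).tendsto.comp hfloor).sub hε
  have hupper := ((tendsto_log_natCast_add_div 1).add hε).const_add (F x₀)
  rw [sub_zero] at hlower
  rw [add_zero, add_zero] at hupper
  refine tendsto_of_tendsto_of_tendsto_of_le_of_le' hlower hupper ?_ ?_
  · filter_upwards [eventually_gt_atTop 0] with N hN
    exact le_log_sum_exp_div hN (hfloor_le N) (hc N hN _ (hfloor_le N))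
  · filter_upwards [eventually_gt_atTop 0] with N hN
    simpa [add_div] using log_sum_exp_div_le_of_isMaxOn hmax hN (hc N hN)

end Laplace

lemma sum_spin_eq_card {N : ℕ} (σ : Fin N → Bool) :
    ∑ i, spin (σ i) = 2 * #{i | σ i = true} - N := by
  have hspin : ∀ i, spin (σ i) = 2 * (if σ i = true then 1 else 0) - 1 := by
    intro i; cases σ i <;> norm_num [spin]
  simp only [hspin, sum_sub_distrib, ← mul_sum, sum_boole, sum_const, card_univ,
    Fintype.card_fin, nsmul_eq_mul, mul_one]

lemma sum_comp_sum_spin (N : ℕ) (f : ℝ → ℝ) :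
    ∑ σ : Fin N → Bool, f (∑ i, spin (σ i)) =
      ∑ j ∈ range (N + 1), N.choose j * f (2 * j - N) := by
  have hsubsets : ∑ σ : Fin N → Bool, f (∑ i, spin (σ i)) =
      ∑ s ∈ (univ : Finset (Fin N)).powerset, f (2 * #s - N) := by
    refine sum_nbij' (fun σ => ({i | σ i = true} : Finset (Fin N))) (fun s i => i ∈ s)
      ?_ ?_ ?_ ?_ ?_
    · simp
    · simp
    · intro σ _; funext i; simp
    · intro s _; ext i; simp
    · intro σ _; rw [sum_spin_eq_card]
  rw [hsubsets, sum_powerset_apply_card (fun j => f (2 * j - N))]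
  simp [nsmul_eq_mul]

theorem tendsto_log_sum_exp_mag {f : ℝ → ℝ} (hf : ContinuousOn f (Set.Icc (-1) 1)) {x₀ : ℝ}
    (hx₀ : x₀ ∈ Set.Icc 0 1)
    (hmax : IsMaxOn (fun x => f (2 * x - 1) + binEntropy x) (Set.Icc 0 1) x₀) :
    Tendsto (fun N : ℕ => 1 / (N : ℝ) * log (∑ σ : Fin N → Bool, exp (N * f (mag N σ))))
      atTop (𝓝 (f (2 * x₀ - 1) + binEntropy x₀)) := by
  have hgroup : ∀ N : ℕ, ∑ σ : Fin N → Bool, exp (N * f (mag N σ)) =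
      ∑ j ∈ range (N + 1), exp (log (N.choose j) + N * f ((2 * j - N) / N)) := by
    intro N
    rw [Fintype.sum_congr _ _ fun σ => by rw [mag],
      sum_comp_sum_spin N fun s => exp (N * f (s / N))]
    refine sum_congr rfl fun j hj => ?_
    have hjN : j ≤ N := Nat.lt_succ_iff.mp (mem_range.mp hj)
    rw [exp_add, exp_log (by exact_mod_cast Nat.choose_pos hjN)]
  simp_rw [hgroup]
  have hF : ContinuousOn (fun x => f (2 * x - 1) + binEntropy x) (Set.Icc 0 1) := by
    refine (hf.comp (by fun_prop) fun x hx => ?_).add binEntropy_continuous.continuousOn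
    constructor <;> linarith [hx.1, hx.2]
  have hε : Tendsto (fun N : ℕ => (2 + log N) / N) atTop (𝓝 0) := by
    simpa [add_div] using (tendsto_const_div_atTop_nhds_zero_nat 2).add
      (tendsto_log_natCast_add_div 0)
  refine tendsto_log_sum_exp_div (F := fun x => f (2 * x - 1) + binEntropy x) hF hx₀ hmax hε
    fun N hN j hj => ?_
  have hN' : (N : ℝ) ≠ 0 := by positivity
  have hmag : (2 * j - N) / (N : ℝ) = 2 * (j / N) - 1 := by field_simp
  convert abs_log_choose_sub_mul_binEntropy_le hj using 2
  rw [hmag]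
  ring

theorem polynomial_g_limit_general (β : ℝ) (n : ℕ) (a : ℕ → ℝ) :
    ∃ L : ℝ, Tendsto (fun N : ℕ =>
      (1 / (N : ℝ)) * Real.log (∑ σ : Fin N → Bool,
        Real.exp (β * N * ∑ k ∈ Finset.range (n + 1), a k * (mag N σ) ^ k)))
      atTop (nhds L) := by
  set g : ℝ → ℝ := fun x => β * ∑ k ∈ range (n + 1), a k * x ^ k
  have hF : ContinuousOn (fun x => g (2 * x - 1) + binEntropy x) (Set.Icc 0 1) := by
    fun_prop
  obtain ⟨x₀, hx₀, hmax⟩ :=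
    isCompact_Icc.exists_isMaxOn (Set.nonempty_Icc.2 zero_le_one) hF
  refine ⟨_, (tendsto_log_sum_exp_mag (by fun_prop) hx₀ hmax).congr fun N => ?_⟩
  simp only [g, mul_left_comm (N : ℝ) β, mul_assoc]

/-- the mean-field model with polynomial `g` has a thermodynamic limit. -/
theorem polynomial_g_limit (β : ℝ) (hβ : 0 < β) (n : ℕ) (a : ℕ → ℝ) :
    ∃ L : ℝ, Tendsto (fun N : ℕ =>
      (1 / (N : ℝ)) * Real.log (∑ σ : Fin N → Bool,
        Real.exp (β * N * ∑ k ∈ Finset.range (n + 1), a k * (mag N σ) ^ k)))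
      atTop (nhds L) :=
  polynomial_g_limit_general β n a
end

section
/- For the random field Curie–Weiss model with Hamiltonian H_N(h,σ) = -(1/N)∑_{i,j=1}^N σ_iσ_j + ∑_{i=1}^N h_iσ_i with h_i ∈ {-1,1}, writing m_N^±(σ,h) = (1/N)∑_i ((1±h_i)/2)σ_i, one has H_N = -N[(m_N^+ + m_N^-)² − (m_N^+ − m_N^-)], and for every fixed realization h the free energy densities satisfy N α_N(h) ≤ N_1 α_{N_1}(h) + N_2 α_{N_2}(h) for every decomposition N = N_1 + N_2. -/
/-!
With `g (x, y) = (x + y)² - (x - y)` (`meanFieldEnergy`) one has `H_N = -N g(m⁺, m⁻)`, and `g` is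
jointly convex. Splitting the sites into blocks of sizes `N₁`, `N₂`, the magnetization vector of a
glued configuration is the `(N₁/N, N₂/N)`-average of the block magnetizations, so convexity gives
`H_N ≥ H_{N₁} + H_{N₂}` configurationwise. For `β ≥ 0` the partition function is therefore
submultiplicative, `Z_N ≤ Z_{N₁} Z_{N₂}`, and taking logarithms gives the subadditivity of `N α_N`.
-/

open Finset

/-- Random field Curie–Weiss Hamiltonian with field `η`. -/
noncomputable def hamRF (M : ℕ) (η σ : Fin M → Bool) : ℝ :=
  -(1 / (M : ℝ)) * (∑ i, ∑ j, spin (σ i) * spin (σ j)) + ∑ i, spin (η i) * spin (σ i)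

noncomputable def magPlus (M : ℕ) (η σ : Fin M → Bool) : ℝ :=
  (1 / (M : ℝ)) * ∑ i, ((1 + spin (η i)) / 2) * spin (σ i)

noncomputable def magMinus (M : ℕ) (η σ : Fin M → Bool) : ℝ :=
  (1 / (M : ℝ)) * ∑ i, ((1 - spin (η i)) / 2) * spin (σ i)

noncomputable def alphaRF (β : ℝ) (M : ℕ) (η : Fin M → Bool) : ℝ :=
  (1 / (M : ℝ)) * Real.log (∑ σ : Fin M → Bool, Real.exp (-β * hamRF M η σ))

def meanFieldEnergy (p : ℝ × ℝ) : ℝ := (p.1 + p.2) ^ 2 - (p.1 - p.2)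

theorem convexOn_meanFieldEnergy : ConvexOn ℝ Set.univ meanFieldEnergy :=
  ((even_two.convexOn_pow (𝕜 := ℝ)).comp_linearMap
      (LinearMap.fst ℝ ℝ ℝ + LinearMap.snd ℝ ℝ ℝ)).sub
    ((LinearMap.fst ℝ ℝ ℝ - LinearMap.snd ℝ ℝ ℝ).concaveOn convex_univ)

theorem ConvexOn.add_mul_map_inv_smul_le {E : Type*} [AddCommGroup E] [Module ℝ E] {f : E → ℝ}
    (hf : ConvexOn ℝ Set.univ f) {a b : ℝ} (ha : 0 < a) (hb : 0 < b) (x y : E) :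
    (a + b) * f ((a + b)⁻¹ • (a • x + b • y)) ≤ a * f x + b * f y := by
  have hab : 0 < a + b := add_pos ha hb
  have h := hf.2 (Set.mem_univ x) (Set.mem_univ y) (div_pos ha hab).le (div_pos hb hab).le
    (by field_simp)
  rw [smul_add, smul_smul, smul_smul, ← div_eq_inv_mul, ← div_eq_inv_mul]
  calc (a + b) * f ((a / (a + b)) • x + (b / (a + b)) • y)
      ≤ (a + b) * ((a / (a + b)) • f x + (b / (a + b)) • f y) := by gcongr
    _ = a * f x + b * f y := by simp only [smul_eq_mul]; field_simp

noncomputable def magnetization (M : ℕ) (η σ : Fin M → Bool) : ℝ × ℝ :=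
  (magPlus M η σ, magMinus M η σ)

theorem hamRF_eq_neg_mul_meanFieldEnergy {M : ℕ} (hM : M ≠ 0) (η σ : Fin M → Bool) :
    hamRF M η σ = -(M : ℝ) * meanFieldEnergy (magnetization M η σ) := by
  have hsum : ∑ i, (1 + spin (η i)) / 2 * spin (σ i) + ∑ i, (1 - spin (η i)) / 2 * spin (σ i)
      = ∑ i, spin (σ i) := by
    rw [← sum_add_distrib]; congr! 1; ring
  have hdiff : ∑ i, (1 + spin (η i)) / 2 * spin (σ i) - ∑ i, (1 - spin (η i)) / 2 * spin (σ i)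
      = ∑ i, spin (η i) * spin (σ i) := by
    rw [← sum_sub_distrib]; congr! 1; ring
  simp only [hamRF, meanFieldEnergy, magnetization, magPlus, magMinus, ← mul_add, ← mul_sub,
    hsum, hdiff, ← sum_mul_sum]
  field_simp
  ring

theorem magnetization_append {N₁ N₂ : ℕ} (h₁ : N₁ ≠ 0) (h₂ : N₂ ≠ 0) (η₁ σ₁ : Fin N₁ → Bool)
    (η₂ σ₂ : Fin N₂ → Bool) :
    magnetization (N₁ + N₂) (Fin.append η₁ η₂) (Fin.append σ₁ σ₂) =
      ((N₁ : ℝ) + N₂)⁻¹ •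
        ((N₁ : ℝ) • magnetization N₁ η₁ σ₁ + (N₂ : ℝ) • magnetization N₂ η₂ σ₂) := by
  simp only [magnetization, magPlus, magMinus, Fin.sum_univ_add, Fin.append_left, Fin.append_right,
    Prod.smul_mk, Prod.mk_add_mk, smul_eq_mul]
  push_cast
  field_simp

theorem hamRF_add_le_hamRF_append {N₁ N₂ : ℕ} (h₁ : N₁ ≠ 0) (h₂ : N₂ ≠ 0) (η₁ σ₁ : Fin N₁ → Bool)
    (η₂ σ₂ : Fin N₂ → Bool) :
    hamRF N₁ η₁ σ₁ + hamRF N₂ η₂ σ₂ ≤ hamRF (N₁ + N₂) (Fin.append η₁ η₂) (Fin.append σ₁ σ₂) := by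
  rw [hamRF_eq_neg_mul_meanFieldEnergy h₁, hamRF_eq_neg_mul_meanFieldEnergy h₂,
    hamRF_eq_neg_mul_meanFieldEnergy (by omega), magnetization_append h₁ h₂, Nat.cast_add]
  have hconv := convexOn_meanFieldEnergy.add_mul_map_inv_smul_le
    (Nat.cast_pos.2 (Nat.pos_of_ne_zero h₁)) (Nat.cast_pos.2 (Nat.pos_of_ne_zero h₂))
    (magnetization N₁ η₁ σ₁) (magnetization N₂ η₂ σ₂)
  linarith

theorem sum_exp_neg_mul_le_mul_of_add_le {ι κ γ : Type*} [Fintype ι] [Fintype κ] [Fintype γ]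
    (e : ι × κ ≃ γ) {β : ℝ} (hβ : 0 ≤ β) {H : γ → ℝ} {H₁ : ι → ℝ} {H₂ : κ → ℝ}
    (hH : ∀ a b, H₁ a + H₂ b ≤ H (e (a, b))) :
    ∑ c, Real.exp (-β * H c) ≤ (∑ a, Real.exp (-β * H₁ a)) * ∑ b, Real.exp (-β * H₂ b) := by
  rw [← Fintype.sum_equiv e (fun p => Real.exp (-β * H (e p))) _ (fun _ => rfl), sum_mul_sum,
    ← Fintype.sum_prod_type']
  gcongr with p
  rw [← Real.exp_add, Real.exp_le_exp]
  nlinarith [hH p.1 p.2]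

theorem natCast_mul_alphaRF (β : ℝ) {M : ℕ} (hM : M ≠ 0) (η : Fin M → Bool) :
    (M : ℝ) * alphaRF β M η = Real.log (∑ σ, Real.exp (-β * hamRF M η σ)) := by
  rw [alphaRF, ← mul_assoc, mul_one_div_cancel (Nat.cast_ne_zero.2 hM), one_mul]

/-- the random field Curie–Weiss Hamiltonian is a convex mean-field function of
`(m⁺, m⁻)`, and the free energy is subadditive pointwise in the field realization. -/
theorem random_field_cw (β : ℝ) (hβ : 0 < β) (N₁ N₂ : ℕ) (h1 : 1 ≤ N₁) (h2 : 1 ≤ N₂)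
    (η : Fin (N₁ + N₂) → Bool) :
    (∀ σ : Fin (N₁ + N₂) → Bool,
      hamRF (N₁ + N₂) η σ = -((N₁ + N₂ : ℝ)) *
        ((magPlus (N₁ + N₂) η σ + magMinus (N₁ + N₂) η σ) ^ 2
          - (magPlus (N₁ + N₂) η σ - magMinus (N₁ + N₂) η σ))) ∧
    ((N₁ + N₂ : ℝ)) * alphaRF β (N₁ + N₂) η ≤
      (N₁ : ℝ) * alphaRF β N₁ (fun i => η (Fin.castAdd N₂ i))
      + (N₂ : ℝ) * alphaRF β N₂ (fun i => η (Fin.natAdd N₁ i)) := by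
  have hN₁ : N₁ ≠ 0 := by omega
  have hN₂ : N₂ ≠ 0 := by omega
  refine ⟨fun σ => by rw [hamRF_eq_neg_mul_meanFieldEnergy (by omega), Nat.cast_add]; rfl, ?_⟩
  obtain ⟨⟨η₁, η₂⟩, rfl⟩ := (Fin.appendEquiv N₁ N₂).surjective η
  simp only [Fin.appendEquiv_apply, Fin.append_left, Fin.append_right]
  have hZ := sum_exp_neg_mul_le_mul_of_add_le (Fin.appendEquiv N₁ N₂) hβ.le
    (fun σ₁ σ₂ => hamRF_add_le_hamRF_append hN₁ hN₂ η₁ σ₁ η₂ σ₂)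
  rw [← Nat.cast_add, natCast_mul_alphaRF β (by omega), natCast_mul_alphaRF β hN₁,
    natCast_mul_alphaRF β hN₂, ← Real.log_mul (by positivity) (by positivity)]
  exact Real.log_le_log (by positivity) hZ
end
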